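/- arXiv:2507.04450 — 2 statements merged into one kernel-verified Lean document; each statement's English description precedes it below -/
import Mathlib

section
/- Let s >= 0, mu >= 1, and x, y in R^3 with x_3 > 0 > y_3. Then the function (u,v) |-> (gamma_s(kappa) + mu*kappa)^{-1} * exp(-gamma_s(kappa)*x_3 + kappa*y_3 + i*(u*(x_1 - y_1) + v*(x_2 - y_2))), where kappa = sqrt(u^2 + v^2) and gamma_s(kappa) is the principal complex square root of kappa^2 - i*s, is Lebesgue integrable on R^2. -/
open MeasureTheory

/-- The real part of a principal complex square root is nonnegative. -/
lemma re_cpow_half_nonneg (z : ℂ) : 0 ≤ (z ^ ((1 : ℂ) / 2)).re := by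
  rcases eq_or_ne z 0 with rfl | hz
  · rw [Complex.zero_cpow (by norm_num)]
    simp
  · rw [Complex.cpow_def_of_ne_zero hz, Complex.exp_re]
    apply mul_nonneg (Real.exp_pos _).le
    have him : (Complex.log z * ((1 : ℂ) / 2)).im = z.arg / 2 := by
      simp [Complex.mul_im, Complex.log_im]
      ring
    rw [him]
    apply Real.cos_nonneg_of_mem_Icc
    constructor
    · have := Complex.neg_pi_lt_arg z
      linarith
    · have := Complex.arg_le_pi z
      linarith

/-- An even integrand `|t|^(-1/2) * exp (-b * |t|)` is integrable on `ℝ` for `b > 0`. -/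
lemma integrable_abs_rpow_mul_exp_neg_mul_abs {b : ℝ} (hb : 0 < b) :
    Integrable (fun t : ℝ => |t| ^ (-(1 : ℝ) / 2) * Real.exp (-b * |t|)) := by
  have hIoi : IntegrableOn (fun t : ℝ => |t| ^ (-(1 : ℝ) / 2) * Real.exp (-b * |t|))
      (Set.Ioi 0) := by
    have := integrableOn_rpow_mul_exp_neg_mul_rpow
      (s := -(1 : ℝ) / 2) (p := 1) (b := b) (by norm_num) one_pos hb
    refine this.congr_fun (fun t ht => ?_) measurableSet_Ioi
    have ht' : 0 < t := ht
    rw [abs_of_pos ht']; simp only [Real.rpow_one]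
  have heven : ∀ t : ℝ, |(-t)| ^ (-(1 : ℝ) / 2) * Real.exp (-b * |(-t)|)
      = |t| ^ (-(1 : ℝ) / 2) * Real.exp (-b * |t|) := by
    intro t; rw [abs_neg]
  rw [← integrableOn_univ, ← Set.Iio_union_Ici (a := (0 : ℝ)), integrableOn_union,
    integrableOn_Ici_iff_integrableOn_Ioi]
  refine ⟨?_, hIoi⟩
  rw [← (Measure.measurePreserving_neg (volume : Measure ℝ)).integrableOn_comp_preimage
      (Homeomorph.neg ℝ).measurableEmbedding]
  have hpre : (Neg.neg ⁻¹' Set.Iio (0:ℝ)) = Set.Ioi 0 := by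
    ext t; simp
  simp only [Function.comp_def, heven, hpre]
  exact hIoi

/-- Absolute convergence of the integral defining the half-space Green's
function `G_s(x, y)`: for `s ≥ 0`, `μ ≥ 1`, observation point `x` in the air
(`x₃ > 0`) and source point `y` in the soil (`y₃ < 0`), the integrand
`(γ_s(κ) + μκ)⁻¹ e^{-γ_s(κ) x₃ + κ y₃ + i u(x₁-y₁) + i v(x₂-y₂)}`, with
`κ = √(u² + v²)` and `γ_s(κ)` the principal complex square root of `κ² - i s`,
is Lebesgue integrable on `ℝ²`. -/
theorem halfspace_green_integrand_integrable
    (s : ℝ) (hs : 0 ≤ s) (μ : ℝ) (hμ : 1 ≤ μ)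
    (x y : EuclideanSpace ℝ (Fin 3)) (hx : 0 < x 2) (hy : y 2 < 0) :
    Integrable (fun p : ℝ × ℝ =>
      (((Real.sqrt (p.1 ^ 2 + p.2 ^ 2) : ℂ) ^ 2 - Complex.I * (s : ℂ)) ^ ((1 : ℂ) / 2)
          + (μ : ℂ) * (Real.sqrt (p.1 ^ 2 + p.2 ^ 2) : ℂ))⁻¹ *
        Complex.exp
          (-(((Real.sqrt (p.1 ^ 2 + p.2 ^ 2) : ℂ) ^ 2 - Complex.I * (s : ℂ)) ^ ((1 : ℂ) / 2))
              * ((x 2 : ℝ) : ℂ)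
            + ((Real.sqrt (p.1 ^ 2 + p.2 ^ 2) * y 2 : ℝ) : ℂ)
            + Complex.I * ((p.1 * (x 0 - y 0) + p.2 * (x 1 - y 1) : ℝ) : ℂ))) := by
  set b : ℝ := -(y 2) / Real.sqrt 2 with hbdef
  have hs2 : (0:ℝ) < Real.sqrt 2 := Real.sqrt_pos.2 (by norm_num)
  have hb : 0 < b := div_pos (by linarith) hs2
  have hg := integrable_abs_rpow_mul_exp_neg_mul_abs hb
  have hG : Integrable (fun p : ℝ × ℝ =>
      ((Real.sqrt 2)⁻¹ * (|p.1| ^ (-(1:ℝ)/2) * Real.exp (-b * |p.1|))) *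
      (|p.2| ^ (-(1:ℝ)/2) * Real.exp (-b * |p.2|))) := by
    rw [MeasureTheory.Measure.volume_eq_prod]
    exact (hg.const_mul _).mul_prod hg
  -- measurability
  have hκm : Measurable fun p : ℝ × ℝ => Real.sqrt (p.1 ^ 2 + p.2 ^ 2) :=
    (continuous_fst.pow 2 |>.add (continuous_snd.pow 2)).sqrt.measurable
  have hκℂ : Measurable fun p : ℝ × ℝ => ((Real.sqrt (p.1 ^ 2 + p.2 ^ 2) : ℝ) : ℂ) :=
    Complex.measurable_ofReal.comp hκm
  have hγm : Measurable fun p : ℝ × ℝ =>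
      (((Real.sqrt (p.1 ^ 2 + p.2 ^ 2) : ℂ) ^ 2 - Complex.I * (s : ℂ)) ^ ((1 : ℂ) / 2)) :=
    ((hκℂ.pow measurable_const).sub measurable_const).pow measurable_const
  have hmeas : AEStronglyMeasurable (fun p : ℝ × ℝ =>
      (((Real.sqrt (p.1 ^ 2 + p.2 ^ 2) : ℂ) ^ 2 - Complex.I * (s : ℂ)) ^ ((1 : ℂ) / 2)
          + (μ : ℂ) * (Real.sqrt (p.1 ^ 2 + p.2 ^ 2) : ℂ))⁻¹ *
        Complex.exp
          (-(((Real.sqrt (p.1 ^ 2 + p.2 ^ 2) : ℂ) ^ 2 - Complex.I * (s : ℂ)) ^ ((1 : ℂ) / 2))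
              * ((x 2 : ℝ) : ℂ)
            + ((Real.sqrt (p.1 ^ 2 + p.2 ^ 2) * y 2 : ℝ) : ℂ)
            + Complex.I * ((p.1 * (x 0 - y 0) + p.2 * (x 1 - y 1) : ℝ) : ℂ)))
      (volume : Measure (ℝ × ℝ)) := by
    apply Measurable.aestronglyMeasurable
    refine Measurable.mul ?_ ?_
    · exact ((hγm.add (measurable_const.mul hκℂ))).inv
    · refine Measurable.cexp ?_
      refine Measurable.add (Measurable.add ?_ ?_) ?_
      · exact hγm.neg.mul measurable_const
      · exact Complex.measurable_ofReal.comp (hκm.mul measurable_const)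
      · refine measurable_const.mul (Complex.measurable_ofReal.comp ?_)
        exact (measurable_fst.mul measurable_const).add (measurable_snd.mul measurable_const)
  -- a.e. nonvanishing coordinates
  have haxis1 : ∀ᵐ p : ℝ × ℝ, p.1 ≠ 0 := by
    rw [ae_iff]
    have : {p : ℝ × ℝ | ¬ p.1 ≠ 0} = ({(0:ℝ)} : Set ℝ) ×ˢ (Set.univ : Set ℝ) := by
      ext p; simp [Set.mem_prod, Prod.ext_iff, eq_comm]
    rw [MeasureTheory.Measure.volume_eq_prod, this, MeasureTheory.Measure.prod_prod]
    simp
  have haxis2 : ∀ᵐ p : ℝ × ℝ, p.2 ≠ 0 := by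
    rw [ae_iff]
    have : {p : ℝ × ℝ | ¬ p.2 ≠ 0} = (Set.univ : Set ℝ) ×ˢ ({(0:ℝ)} : Set ℝ) := by
      ext p; simp [Set.mem_prod, Prod.ext_iff, eq_comm]
    rw [MeasureTheory.Measure.volume_eq_prod, this, MeasureTheory.Measure.prod_prod]
    simp
  refine hG.mono' hmeas ?_
  filter_upwards [haxis1, haxis2] with p hu hv
  set u := p.1
  set v := p.2
  set κ : ℝ := Real.sqrt (u ^ 2 + v ^ 2) with hκdef
  have hκpos : 0 < κ := Real.sqrt_pos.2 (by positivity)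
  set γ : ℂ := ((κ : ℂ) ^ 2 - Complex.I * (s : ℂ)) ^ ((1 : ℂ) / 2) with hγdef
  have hγre : 0 ≤ γ.re := re_cpow_half_nonneg _
  -- norm of the inverse factor
  have hden_re : κ ≤ (γ + (μ : ℂ) * (κ : ℂ)).re := by
    have : (γ + (μ : ℂ) * (κ : ℂ)).re = γ.re + μ * κ := by
      simp [Complex.add_re, Complex.mul_re]
    rw [this]
    nlinarith
  have hden : κ ≤ ‖γ + (μ : ℂ) * (κ : ℂ)‖ := hden_re.trans (Complex.re_le_norm _)
  have hinv : ‖(γ + (μ : ℂ) * (κ : ℂ))⁻¹‖ ≤ κ⁻¹ := by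
    rw [norm_inv]
    exact inv_anti₀ hκpos hden
  -- norm of the exponential factor
  have hexp : ‖Complex.exp (-γ * ((x 2 : ℝ) : ℂ) + ((κ * y 2 : ℝ) : ℂ)
      + Complex.I * ((u * (x 0 - y 0) + v * (x 1 - y 1) : ℝ) : ℂ))‖
      ≤ Real.exp (κ * y 2) := by
    rw [Complex.norm_exp]
    apply Real.exp_le_exp.2
    have hre : (-γ * ((x 2 : ℝ) : ℂ) + ((κ * y 2 : ℝ) : ℂ)
        + Complex.I * ((u * (x 0 - y 0) + v * (x 1 - y 1) : ℝ) : ℂ)).re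
        = -γ.re * x 2 + κ * y 2 := by
      simp [Complex.add_re, Complex.mul_re]
    rw [hre]
    nlinarith
  -- key radial inequalities
  have habs : 2 * |u| * |v| ≤ u ^ 2 + v ^ 2 := by
    nlinarith [sq_nonneg (|u| - |v|), sq_abs u, sq_abs v]
  have hrad1 : Real.sqrt 2 * (|u| ^ ((1:ℝ)/2) * |v| ^ ((1:ℝ)/2)) ≤ κ := by
    have h1 : Real.sqrt 2 * (|u| ^ ((1:ℝ)/2) * |v| ^ ((1:ℝ)/2))
        = Real.sqrt (2 * (|u| * |v|)) := by
      rw [Real.sqrt_mul (by norm_num), Real.sqrt_mul (abs_nonneg u),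
        Real.sqrt_eq_rpow, Real.sqrt_eq_rpow, Real.sqrt_eq_rpow]
    rw [h1, hκdef]
    apply Real.sqrt_le_sqrt
    nlinarith
  have hrad2 : |u| + |v| ≤ Real.sqrt 2 * κ := by
    have h1 : Real.sqrt 2 * κ = Real.sqrt (2 * (u ^ 2 + v ^ 2)) := by
      rw [hκdef, Real.sqrt_mul (by norm_num)]
    rw [h1]
    rw [Real.le_sqrt (by positivity) (by positivity)]
    nlinarith [sq_abs u, sq_abs v, habs]
  -- exponential bound
  have hexp2 : Real.exp (κ * y 2) ≤ Real.exp (-b * |u|) * Real.exp (-b * |v|) := by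
    rw [← Real.exp_add]
    apply Real.exp_le_exp.2
    have hle : κ * y 2 ≤ ((|u| + |v|) / Real.sqrt 2) * y 2 := by
      apply mul_le_mul_of_nonpos_right _ hy.le
      rw [div_le_iff₀ hs2]
      linarith [hrad2]
    have heq : -b * |u| + -b * |v| = ((|u| + |v|) / Real.sqrt 2) * y 2 := by
      rw [hbdef]
      field_simp
    linarith
  -- inverse factor bound
  have hinv2 : κ⁻¹ ≤ (Real.sqrt 2)⁻¹ * (|u| ^ (-(1:ℝ)/2) * |v| ^ (-(1:ℝ)/2)) := by
    have hpos : 0 < Real.sqrt 2 * (|u| ^ ((1:ℝ)/2) * |v| ^ ((1:ℝ)/2)) := by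
      have hu' : (0:ℝ) < |u| := abs_pos.2 hu
      have hv' : (0:ℝ) < |v| := abs_pos.2 hv
      positivity
    have := inv_anti₀ hpos hrad1
    calc κ⁻¹ ≤ (Real.sqrt 2 * (|u| ^ ((1:ℝ)/2) * |v| ^ ((1:ℝ)/2)))⁻¹ := this
      _ = (Real.sqrt 2)⁻¹ * (|u| ^ (-(1:ℝ)/2) * |v| ^ (-(1:ℝ)/2)) := by
          rw [mul_inv, mul_inv]
          have e1 : |u| ^ (-(1:ℝ)/2) = (|u| ^ ((1:ℝ)/2))⁻¹ := by
            rw [show (-(1:ℝ)/2) = -((1:ℝ)/2) by ring, Real.rpow_neg (abs_nonneg u)]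
          have e2 : |v| ^ (-(1:ℝ)/2) = (|v| ^ ((1:ℝ)/2))⁻¹ := by
            rw [show (-(1:ℝ)/2) = -((1:ℝ)/2) by ring, Real.rpow_neg (abs_nonneg v)]
          rw [e1, e2]
  -- assemble
  rw [norm_mul]
  calc ‖(γ + (μ : ℂ) * (κ : ℂ))⁻¹‖ * ‖Complex.exp (-γ * ((x 2 : ℝ) : ℂ)
        + ((κ * y 2 : ℝ) : ℂ)
        + Complex.I * ((u * (x 0 - y 0) + v * (x 1 - y 1) : ℝ) : ℂ))‖
      ≤ κ⁻¹ * Real.exp (κ * y 2) := by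
        apply mul_le_mul hinv hexp (norm_nonneg _) (by positivity)
    _ ≤ ((Real.sqrt 2)⁻¹ * (|u| ^ (-(1:ℝ)/2) * |v| ^ (-(1:ℝ)/2)))
        * (Real.exp (-b * |u|) * Real.exp (-b * |v|)) := by
        apply mul_le_mul hinv2 hexp2 (Real.exp_pos _).le
        have hu' : (0:ℝ) < |u| := abs_pos.2 hu
        have hv' : (0:ℝ) < |v| := abs_pos.2 hv
        positivity
    _ = ((Real.sqrt 2)⁻¹ * (|u| ^ (-(1:ℝ)/2) * Real.exp (-b * |u|)))
        * (|v| ^ (-(1:ℝ)/2) * Real.exp (-b * |v|)) := by ring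
end

section
/- Let kappa > 0 be real, let gamma in C with Re(gamma) > 0, let mu > 0 be real, and let y_3 < 0. Define Gamma = (gamma - mu*kappa)/(gamma + mu*kappa), T = 2*gamma/(gamma + mu*kappa), and g : R -> C by g(t) = (1/(2*gamma)) * ( exp(-gamma*|t - y_3|) + Gamma * exp(gamma*(t + y_3)) ) for t < 0 and g(t) = (T/(2*gamma)) * exp(-kappa*t + gamma*y_3) for t >= 0. Then: (i) g'' = gamma^2 * g on (-infinity, y_3) and on (y_3, 0); (ii) g'' = kappa^2 * g on (0, infinity); (iii) g is continuous at t = 0 (the left and right limits both equal T*exp(gamma*y_3)/(2*gamma)) and the one-sided derivatives at 0 satisfy g'(0^-) = mu * g'(0^+); (iv) g is continuous at t = y_3 and the one-sided derivatives there jump by g'(y_3^+) - g'(y_3^-) = -1. -/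
open Filter Set

private noncomputable def ce (c a : ℂ) (t : ℝ) : ℂ := c * Complex.exp (a * t)

private lemma ce_hasDerivAt (c a : ℂ) (t : ℝ) :
    HasDerivAt (ce c a) (ce (a * c) a t) t := by
  have h1 : HasDerivAt (fun s : ℝ => a * (s : ℂ)) a t := by
    simpa using (Complex.ofRealCLM.hasDerivAt (x := t)).const_mul a
  have h2 := (h1.cexp).const_mul c
  convert h2 using 1
  · rfl
  · rfl
  simp only [ce]; ring

private lemma ce_deriv (c a : ℂ) : deriv (ce c a) = ce (a * c) a :=
  funext fun t => (ce_hasDerivAt c a t).deriv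

private noncomputable def ce2 (c a c' a' : ℂ) (t : ℝ) : ℂ := ce c a t + ce c' a' t

private lemma ce2_hasDerivAt (c a c' a' : ℂ) (t : ℝ) :
    HasDerivAt (ce2 c a c' a') (ce2 (a * c) a (a' * c') a' t) t :=
  (ce_hasDerivAt c a t).add (ce_hasDerivAt c' a' t)

private lemma ce2_deriv (c a c' a' : ℂ) :
    deriv (ce2 c a c' a') = ce2 (a * c) a (a' * c') a' :=
  funext fun t => (ce2_hasDerivAt c a c' a' t).deriv

/-- The Fourier-transformed TE Green's function of the soil-air half-space
problem, with reflection coefficient `Γ = (γ - μκ)/(γ + μκ)` and transmission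
coefficient `T = 2γ/(γ + μκ)`, solves the one-dimensional modal equations
`g'' = γ² g` in the soil (away from the source at `y₃ < 0`) and `g'' = κ² g`
in the air, is continuous at the interface `t = 0` with the matching
condition `g'(0⁻) = μ g'(0⁺)`, and is continuous at the source point `y₃`
where its derivative jumps by `-1`. -/
theorem TE_modal_green_function
    (κ : ℝ) (hκ : 0 < κ) (γ : ℂ) (hγ : 0 < γ.re) (μ : ℝ) (hμ : 0 < μ)
    (y₃ : ℝ) (hy₃ : y₃ < 0)
    (Γ T : ℂ)
    (hΓ : Γ = (γ - ((μ * κ : ℝ) : ℂ)) / (γ + ((μ * κ : ℝ) : ℂ)))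
    (hT : T = 2 * γ / (γ + ((μ * κ : ℝ) : ℂ)))
    (g : ℝ → ℂ)
    (hg : ∀ t : ℝ, g t =
      if t < 0 then
        (1 / (2 * γ)) * (Complex.exp (-γ * ((|t - y₃| : ℝ) : ℂ))
          + Γ * Complex.exp (γ * ((t + y₃ : ℝ) : ℂ)))
      else
        (T / (2 * γ)) * Complex.exp (-((κ * t : ℝ) : ℂ) + γ * ((y₃ : ℝ) : ℂ))) :
    (∀ t : ℝ, t < y₃ → deriv (deriv g) t = γ ^ 2 * g t) ∧
    (∀ t : ℝ, y₃ < t → t < 0 → deriv (deriv g) t = γ ^ 2 * g t) ∧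
    (∀ t : ℝ, 0 < t → deriv (deriv g) t = ((κ : ℂ)) ^ 2 * g t) ∧
    Tendsto g (nhdsWithin 0 (Set.Iio 0)) (nhds (T * Complex.exp (γ * (y₃ : ℂ)) / (2 * γ))) ∧
    Tendsto g (nhdsWithin 0 (Set.Ioi 0)) (nhds (T * Complex.exp (γ * (y₃ : ℂ)) / (2 * γ))) ∧
    derivWithin g (Set.Iic 0) 0 = (μ : ℂ) * derivWithin g (Set.Ici 0) 0 ∧
    ContinuousAt g y₃ ∧
    derivWithin g (Set.Ici y₃) y₃ - derivWithin g (Set.Iic y₃) y₃ = -1 := by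
  have hμκ : (0:ℝ) < μ * κ := mul_pos hμ hκ
  have hd : γ + ((μ * κ : ℝ) : ℂ) ≠ 0 := by
    intro h
    have h' := congrArg Complex.re h
    simp [Complex.add_re, Complex.ofReal_re] at h'
    linarith
  have hγ0 : γ ≠ 0 := by
    intro h; rw [h] at hγ; simp at hγ
  have h2γ : (2 : ℂ) * γ ≠ 0 := mul_ne_zero two_ne_zero hγ0
  have hd' : γ + (μ : ℂ) * (κ : ℂ) ≠ 0 := by push_cast at hd; exact hd
  have hTΓ : 1 + Γ = T := by
    rw [hΓ, hT]; field_simp [hd']; ring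
  -- the constants
  set c1 : ℂ := 1 / (2 * γ) * (Complex.exp (-γ * (y₃ : ℂ)) + Γ * Complex.exp (γ * (y₃ : ℂ)))
    with hc1
  set c2 : ℂ := 1 / (2 * γ) * Complex.exp (γ * (y₃ : ℂ)) with hc2
  set c3 : ℂ := 1 / (2 * γ) * Γ * Complex.exp (γ * (y₃ : ℂ)) with hc3
  set c4 : ℂ := T / (2 * γ) * Complex.exp (γ * (y₃ : ℂ)) with hc4
  have hEne : Complex.exp (γ * (y₃ : ℂ)) ≠ 0 := Complex.exp_ne_zero _
  have hX : Complex.exp (-γ * (y₃ : ℂ)) = (Complex.exp (γ * (y₃ : ℂ)))⁻¹ := by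
    rw [show -γ * (y₃ : ℂ) = -(γ * y₃) by ring, Complex.exp_neg]
  have hc423 : c4 = c2 + c3 := by rw [hc2, hc3, hc4, ← hTΓ]; ring
  -- region identities
  have hgl : ∀ t : ℝ, t < y₃ → g t = ce c1 γ t := by
    intro t ht
    rw [hg t, if_pos (ht.trans hy₃)]
    rw [abs_of_neg (by linarith : t - y₃ < 0)]
    simp only [ce, hc1]
    push_cast
    rw [show -γ * -((t:ℂ) - y₃) = -γ * y₃ + γ * t by ring, Complex.exp_add,
        show γ * ((t:ℂ) + y₃) = γ * y₃ + γ * t by ring, Complex.exp_add]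
    ring
  have hgm : ∀ t : ℝ, y₃ < t → t < 0 → g t = ce2 c2 (-γ) c3 γ t := by
    intro t ht1 ht2
    rw [hg t, if_pos ht2]
    rw [abs_of_pos (by linarith : (0:ℝ) < t - y₃)]
    simp only [ce2, ce, hc2, hc3]
    push_cast
    rw [show -γ * ((t:ℂ) - y₃) = γ * y₃ + -γ * t by ring, Complex.exp_add,
        show γ * ((t:ℂ) + y₃) = γ * y₃ + γ * t by ring, Complex.exp_add]
    ring
  have hgr : ∀ t : ℝ, 0 ≤ t → g t = ce c4 (-(κ:ℂ)) t := by
    intro t ht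
    rw [hg t, if_neg (not_lt.2 ht)]
    simp only [ce, hc4]
    push_cast
    rw [show -((κ:ℂ) * t) + γ * y₃ = γ * y₃ + -(κ:ℂ) * t by ring, Complex.exp_add]
    ring
  have hg0 : g 0 = ce2 c2 (-γ) c3 γ 0 := by
    rw [hgr 0 le_rfl]
    simp only [ce, ce2, Complex.ofReal_zero, mul_zero, Complex.exp_zero, mul_one]
    exact hc423
  have hgy : g y₃ = ce2 c2 (-γ) c3 γ y₃ := by
    rw [hg y₃, if_pos hy₃]
    simp only [sub_self, abs_zero, ce2, ce, hc2, hc3, Complex.ofReal_zero, mul_zero,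
      Complex.exp_zero, mul_one]
    push_cast
    rw [show γ * ((y₃:ℂ) + y₃) = γ * y₃ + γ * y₃ by ring, Complex.exp_add, hX]
    field_simp
  have hgyl : g y₃ = ce c1 γ y₃ := by
    rw [hg y₃, if_pos hy₃]
    simp only [sub_self, abs_zero, ce, hc1, Complex.ofReal_zero, mul_zero,
      Complex.exp_zero, mul_one]
    push_cast
    rw [show γ * ((y₃:ℂ) + y₃) = γ * y₃ + γ * y₃ by ring, Complex.exp_add, hX]
    field_simp
  refine ⟨?_, ?_, ?_, ?_, ?_, ?_, ?_, ?_⟩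
  · -- t < y₃
    intro t ht
    have hev : g =ᶠ[nhds t] ce c1 γ :=
      eventually_of_mem (Iio_mem_nhds ht) fun x hx => hgl x hx
    rw [hev.deriv.deriv_eq, ce_deriv, ce_deriv, hgl t ht]
    simp only [ce]; ring
  · -- y₃ < t < 0
    intro t ht1 ht2
    have hev : g =ᶠ[nhds t] ce2 c2 (-γ) c3 γ :=
      eventually_of_mem (Ioo_mem_nhds ht1 ht2) fun x hx => hgm x hx.1 hx.2
    rw [hev.deriv.deriv_eq, ce2_deriv, ce2_deriv, hgm t ht1 ht2]
    simp only [ce2, ce]; ring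
  · -- 0 < t
    intro t ht
    have hev : g =ᶠ[nhds t] ce c4 (-(κ:ℂ)) :=
      eventually_of_mem (Ioi_mem_nhds ht) fun x hx => hgr x (le_of_lt hx)
    rw [hev.deriv.deriv_eq, ce_deriv, ce_deriv, hgr t (le_of_lt ht)]
    simp only [ce]; ring
  · -- left limit at 0
    have hev : g =ᶠ[nhdsWithin 0 (Iio 0)] ce2 c2 (-γ) c3 γ := by
      filter_upwards [nhdsWithin_le_nhds (Ioi_mem_nhds hy₃), self_mem_nhdsWithin]
        with x hx1 hx2
      exact hgm x hx1 hx2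
    have hval : ce2 c2 (-γ) c3 γ 0 = T * Complex.exp (γ * (y₃ : ℂ)) / (2 * γ) := by
      simp only [ce2, ce, Complex.ofReal_zero, mul_zero, Complex.exp_zero, mul_one]
      rw [← hc423, hc4]; ring
    have hcont : Tendsto (ce2 c2 (-γ) c3 γ) (nhdsWithin 0 (Iio 0))
        (nhds (ce2 c2 (-γ) c3 γ 0)) :=
      ((ce2_hasDerivAt c2 (-γ) c3 γ 0).continuousAt).tendsto.mono_left nhdsWithin_le_nhds
    rw [← hval]
    exact hcont.congr' hev.symm
  · -- right limit at 0
    have hev : g =ᶠ[nhdsWithin 0 (Ioi 0)] ce c4 (-(κ:ℂ)) := by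
      filter_upwards [self_mem_nhdsWithin] with x hx
      exact hgr x (le_of_lt hx)
    have hval : ce c4 (-(κ:ℂ)) 0 = T * Complex.exp (γ * (y₃ : ℂ)) / (2 * γ) := by
      simp only [ce, Complex.ofReal_zero, mul_zero, Complex.exp_zero, mul_one]
      rw [hc4]; ring
    have hcont : Tendsto (ce c4 (-(κ:ℂ))) (nhdsWithin 0 (Ioi 0))
        (nhds (ce c4 (-(κ:ℂ)) 0)) :=
      ((ce_hasDerivAt c4 (-(κ:ℂ)) 0).continuousAt).tendsto.mono_left nhdsWithin_le_nhds
    rw [← hval]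
    exact hcont.congr' hev.symm
  · -- matching derivatives at 0
    have hDR : HasDerivWithinAt g (ce (-(κ:ℂ) * c4) (-(κ:ℂ)) 0) (Ici 0) 0 :=
      (ce_hasDerivAt c4 (-(κ:ℂ)) 0).hasDerivWithinAt.congr
        (fun x hx => hgr x hx) (hgr 0 le_rfl)
    have hDRv : derivWithin g (Ici 0) 0 = ce (-(κ:ℂ) * c4) (-(κ:ℂ)) 0 :=
      hDR.derivWithin (uniqueDiffOn_Ici 0 0 self_mem_Ici)
    have hevL : g =ᶠ[nhdsWithin 0 (Iic 0)] ce2 c2 (-γ) c3 γ := by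
      filter_upwards [nhdsWithin_le_nhds (Ioi_mem_nhds hy₃), self_mem_nhdsWithin]
        with x hx1 hx2
      rcases lt_or_eq_of_le (mem_Iic.mp hx2) with h | h
      · exact hgm x hx1 h
      · subst h; exact hg0
    have hDL : HasDerivWithinAt g (ce2 (-γ * c2) (-γ) (γ * c3) γ 0) (Iic 0) 0 :=
      (ce2_hasDerivAt c2 (-γ) c3 γ 0).hasDerivWithinAt.congr_of_eventuallyEq hevL hg0
    have hDLv : derivWithin g (Iic 0) 0 = ce2 (-γ * c2) (-γ) (γ * c3) γ 0 :=
      hDL.derivWithin (uniqueDiffOn_Iic 0 0 self_mem_Iic)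
    rw [hDRv, hDLv]
    simp only [ce2, ce, Complex.ofReal_zero, mul_zero, Complex.exp_zero, mul_one]
    rw [hc2, hc3, hc4, hΓ, hT]
    push_cast
    field_simp [hd']
    ring
  · -- continuity at y₃
    have hcontC : Continuous fun t : ℝ =>
        (1 / (2 * γ)) * (Complex.exp (-γ * ((|t - y₃| : ℝ) : ℂ))
          + Γ * Complex.exp (γ * ((t + y₃ : ℝ) : ℂ))) := by
      fun_prop
    have hev : (fun t : ℝ =>
        (1 / (2 * γ)) * (Complex.exp (-γ * ((|t - y₃| : ℝ) : ℂ))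
          + Γ * Complex.exp (γ * ((t + y₃ : ℝ) : ℂ)))) =ᶠ[nhds y₃] g := by
      filter_upwards [Iio_mem_nhds hy₃] with x hx
      rw [hg x, if_pos (show x < 0 from hx)]
    exact hcontC.continuousAt.congr hev
  · -- jump at y₃
    have hevR : g =ᶠ[nhdsWithin y₃ (Ici y₃)] ce2 c2 (-γ) c3 γ := by
      filter_upwards [nhdsWithin_le_nhds (Iio_mem_nhds hy₃), self_mem_nhdsWithin]
        with x hx1 hx2
      rcases lt_or_eq_of_le (mem_Ici.mp hx2) with h | h
      · exact hgm x h hx1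
      · subst h; exact hgy
    have hDR : HasDerivWithinAt g (ce2 (-γ * c2) (-γ) (γ * c3) γ y₃) (Ici y₃) y₃ :=
      (ce2_hasDerivAt c2 (-γ) c3 γ y₃).hasDerivWithinAt.congr_of_eventuallyEq hevR hgy
    have hDRv : derivWithin g (Ici y₃) y₃ = ce2 (-γ * c2) (-γ) (γ * c3) γ y₃ :=
      hDR.derivWithin (uniqueDiffOn_Ici y₃ y₃ self_mem_Ici)
    have hIic : ∀ x ∈ Iic y₃, g x = ce c1 γ x := by
      intro x hx
      rcases lt_or_eq_of_le (mem_Iic.mp hx) with h | h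
      · exact hgl x h
      · subst h; exact hgyl
    have hDL : HasDerivWithinAt g (ce (γ * c1) γ y₃) (Iic y₃) y₃ :=
      (ce_hasDerivAt c1 γ y₃).hasDerivWithinAt.congr hIic (hIic y₃ self_mem_Iic)
    have hDLv : derivWithin g (Iic y₃) y₃ = ce (γ * c1) γ y₃ :=
      hDL.derivWithin (uniqueDiffOn_Iic y₃ y₃ self_mem_Iic)
    rw [hDRv, hDLv]
    simp only [ce2, ce, hc1, hc2, hc3]
    rw [hX]
    field_simp
    ring
end
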